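/- If X, Y, XY are integrable and E[Y | σ(X)] = α + βX almost surely for constants α, β with β ≠ 0, then X is square integrable (i.e., X² is integrable). -/

import Mathlib

open MeasureTheory ProbabilityTheory

/-! Pulling the `σ(X)`-measurable factor `X` out of `E[XY | X]` shows that `X · E[Y | X]`
is integrable. With `E[Y | X] = α + βX` this is `αX + βX²`, so `X²` is integrable once `β ≠ 0`. -/

theorem integrable_mul_condExp_of_stronglyMeasurable_left {Ω : Type*} {m m₀ : MeasurableSpace Ω}
    {μ : Measure Ω} {f g : Ω → ℝ} (hf : StronglyMeasurable[m] f) (hfg : Integrable (f * g) μ)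
    (hg : Integrable g μ) : Integrable (f * μ[g | m]) μ :=
  integrable_condExp.congr (condExp_mul_of_stronglyMeasurable_left hf hfg hg)

theorem integrable_sq_of_integrable_mul_affine {Ω : Type*} [MeasurableSpace Ω] {μ : Measure Ω}
    {X : Ω → ℝ} {α β : ℝ} (hX : Integrable X μ)
    (hXaff : Integrable (fun ω => X ω * (α + β * X ω)) μ) (hβ : β ≠ 0) :
    Integrable (fun ω => X ω ^ 2) μ := by
  refine ((hXaff.sub (hX.const_mul α)).const_mul β⁻¹).congr (.of_forall fun ω => ?_)
  simp only [Pi.sub_apply]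
  field_simp
  ring

theorem stmt_3_general {Ω : Type*} [m : MeasurableSpace Ω] (μ : Measure Ω)
    (X Y : Ω → ℝ)
    (hX : Integrable X μ) (hY : Integrable Y μ)
    (hXY : Integrable (fun ω => X ω * Y ω) μ) (α β : ℝ)
    (haff : μ[Y | MeasurableSpace.comap X inferInstance] =ᵐ[μ] fun ω => α + β * X ω)
    (hβ : β ≠ 0) :
    Integrable (fun ω => X ω ^ 2) μ := by
  have hXσ : StronglyMeasurable[MeasurableSpace.comap X inferInstance] X :=
    (Measurable.of_comap_le le_rfl).stronglyMeasurable
  have hXaff : Integrable (fun ω => X ω * (α + β * X ω)) μ :=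
    (integrable_mul_condExp_of_stronglyMeasurable_left hXσ hXY hY).congr
      (haff.mono fun ω h => by rw [Pi.mul_apply, h])
  exact integrable_sq_of_integrable_mul_affine hX hXaff hβ

/-- If X, Y, XY are integrable and E[Y|σ(X)] = α + βX a.s. with β ≠ 0,
then X is square integrable. -/
theorem stmt_3 {Ω : Type*} [m : MeasurableSpace Ω] (μ : Measure Ω) [IsProbabilityMeasure μ]
    (X Y : Ω → ℝ) (hXm : Measurable X) (hYm : Measurable Y)
    (hX : Integrable X μ) (hY : Integrable Y μ)
    (hXY : Integrable (fun ω => X ω * Y ω) μ) (α β : ℝ)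
    (haff : μ[Y | MeasurableSpace.comap X inferInstance] =ᵐ[μ] fun ω => α + β * X ω)
    (hβ : β ≠ 0) :
    Integrable (fun ω => X ω ^ 2) μ :=
  stmt_3_general (m := m) μ X Y hX hY hXY α β haff hβ
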